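/- Let c_1, …, c_N be distinct nonnegative reals and let P be the N×N matrix with P_{xy} = (c_y − c_x)². Then any representation of P as a convex-combination mixture P = Σ_{z∈Ω} p_z · u_z v_zᵀ with probability vector (p_z), and u_z, v_z entrywise-nonnegative probability vectors, requires |Ω| ≥ log₂ N. -/

import Mathlib

/-!
Write `a z x = p z * u z x`. The diagonal of `P` vanishes, so `a z x * v z x = 0` for all `z`, `x`;
and `P x y > 0` for `x ≠ y` gives some `z` with `a z x ≠ 0` and `v z y ≠ 0`, hence `a z y = 0`.
So the supports `{z | a z x ≠ 0}` are pairwise distinct subsets of `Ω`, and `N ≤ 2 ^ |Ω|`.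
-/

section SupportInjective

variable {R ι Ω : Type*} [Semiring R] [PartialOrder R] [IsOrderedRing R] [NoZeroDivisors R]
  [Fintype Ω]

theorem injective_support_of_sum_mul_eq_zero_iff {a b : Ω → ι → R}
    (ha : ∀ z x, 0 ≤ a z x) (hb : ∀ z y, 0 ≤ b z y)
    (hab : ∀ x y, ∑ z, a z x * b z y = 0 ↔ x = y) :
    Function.Injective fun x => Function.support fun z => a z x := by
  have sum_eq_zero_iff (x y : ι) : ∑ z, a z x * b z y = 0 ↔ ∀ z, a z x = 0 ∨ b z y = 0 := by
    simp [Finset.sum_eq_zero_iff_of_nonneg fun z _ => mul_nonneg (ha z x) (hb z y)]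
  intro x y hxy
  by_contra hne
  obtain ⟨z, haz, hbz⟩ : ∃ z, a z x ≠ 0 ∧ b z y ≠ 0 := by
    simpa [sum_eq_zero_iff, hne] using (hab x y).not
  have hay : a z y ≠ 0 := by
    simpa using congrArg (z ∈ ·) hxy |>.mp haz
  exact ((sum_eq_zero_iff y y).mp ((hab y y).mpr rfl) z).elim hay hbz

theorem card_le_two_pow_of_sum_mul_eq_zero_iff [Fintype ι] {a b : Ω → ι → R}
    (ha : ∀ z x, 0 ≤ a z x) (hb : ∀ z y, 0 ≤ b z y)
    (hab : ∀ x y, ∑ z, a z x * b z y = 0 ↔ x = y) :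
    Fintype.card ι ≤ 2 ^ Fintype.card Ω := by
  classical
  simpa using Fintype.card_le_of_injective _ (injective_support_of_sum_mul_eq_zero_iff ha hb hab)

end SupportInjective

theorem Real.logb_two_le_of_le_two_pow {n k : ℕ} (h : n ≤ 2 ^ k) : Real.logb 2 n ≤ k := by
  rcases Nat.eq_zero_or_pos n with rfl | hn
  · simp
  rw [Real.logb_le_iff_le_rpow one_lt_two (by exact_mod_cast hn), Real.rpow_natCast]
  exact_mod_cast h

theorem mixture_size_lower_bound_general {N : ℕ}
    (c : Fin N → ℝ) (hc : Function.Injective c)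
    (P : Matrix (Fin N) (Fin N) ℝ) (hPdef : ∀ x y, P x y = (c y - c x) ^ 2)
    {Ω : Type*} [Fintype Ω]
    (p : Ω → ℝ) (u v : Ω → Fin N → ℝ)
    (hp : ∀ z, 0 ≤ p z)
    (hu : ∀ z x, 0 ≤ u z x)
    (hv : ∀ z y, 0 ≤ v z y)
    (hrep : ∀ x y, P x y = ∑ z, p z * (u z x * v z y)) :
    Real.logb 2 N ≤ (Fintype.card Ω : ℝ) := by
  have hzero : ∀ x y, ∑ z, p z * u z x * v z y = 0 ↔ x = y := by
    intro x y
    simp_rw [mul_assoc, ← hrep, hPdef, pow_eq_zero_iff two_ne_zero, sub_eq_zero, hc.eq_iff, eq_comm]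
  have hcard := card_le_two_pow_of_sum_mul_eq_zero_iff
    (fun z x => mul_nonneg (hp z) (hu z x)) hv hzero
  simpa using Real.logb_two_le_of_le_two_pow hcard

/-- For distinct nonnegative reals c₁,…,c_N and P_{xy} = (c_y − c_x)², any mixture
representation P = Σ_z p_z · u_z v_zᵀ with (p_z) a probability vector and u_z, v_z
nonnegative probability vectors requires |Ω| ≥ log₂ N. -/
theorem mixture_size_lower_bound {N : ℕ}
    (c : Fin N → ℝ) (hc : Function.Injective c) (hcnn : ∀ x, 0 ≤ c x)
    (P : Matrix (Fin N) (Fin N) ℝ) (hPdef : ∀ x y, P x y = (c y - c x) ^ 2)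
    {Ω : Type*} [Fintype Ω]
    (p : Ω → ℝ) (u v : Ω → Fin N → ℝ)
    (hp : ∀ z, 0 ≤ p z) (hp1 : ∑ z, p z = 1)
    (hu : ∀ z x, 0 ≤ u z x) (hu1 : ∀ z, ∑ x, u z x = 1)
    (hv : ∀ z y, 0 ≤ v z y) (hv1 : ∀ z, ∑ y, v z y = 1)
    (hrep : ∀ x y, P x y = ∑ z, p z * (u z x * v z y)) :
    Real.logb 2 N ≤ (Fintype.card Ω : ℝ) :=
  mixture_size_lower_bound_general c hc P hPdef p u v hp hu hv hrep
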